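/- arXiv:1506.02632 — 2 statements merged into one kernel-verified Lean document; each statement's English description precedes it below -/
import Mathlib

section
/- Let f : ℝ^d → ℝ be three times continuously differentiable with all third-order partial derivatives bounded in norm by B on ℝ^d. Let Δ = (Δ¹, …, Δ^d) and Δ̂ = (Δ̂¹, …, Δ̂^d) be random vectors whose 2d coordinates are all mutually independent Rademacher random variables. Then for every θ ∈ ℝ^d, every δ > 0 and every coordinate i ∈ {1, …, d}, | E[ ( f(θ + δ(Δ + Δ̂)) − f(θ − δ(Δ + Δ̂)) ) / (2δ Δⁱ) ] − ∂f/∂θⁱ (θ) | ≤ C δ², where C is a constant depending only on d and B. -/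
open MeasureTheory ProbabilityTheory

/-! Since `Δⁱ = ±1`, dividing by `Δⁱ` is multiplying by it. Taylor's formula of order three along
the line through `θ` in direction `u` gives `f (θ + u) - f (θ - u) = 2 Df(θ) u + O(B ‖u‖³)`; with
`u = δ (Δ + Δ̂)` and the sup norm, `‖u‖ ≤ 2δ`, so the estimator differs from `Df(θ)(Δ + Δ̂) Δⁱ`
by at most `4Bδ²/3` almost surely. The expectation of the latter is
`∑ⱼ ∂ⱼf(θ) E[(Δʲ + Δ̂ʲ) Δⁱ] = ∂ᵢf(θ)`, because independent Rademacher variables are orthonormal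
in `L²`. -/

theorem iteratedDeriv_comp_add_smul {E : Type*} [NormedAddCommGroup E] [NormedSpace ℝ E]
    {f : E → ℝ} {n : WithTop ℕ∞} (hf : ContDiff ℝ n f) {k : ℕ} (hk : k ≤ n) (x u : E) (t : ℝ) :
    iteratedDeriv k (fun s : ℝ => f (x + s • u)) t =
      iteratedFDeriv ℝ k f (x + t • u) (fun _ => u) := by
  have hcomp : (fun s : ℝ => f (x + s • u)) =
      (fun z => f (x + z)) ∘ ((ContinuousLinearMap.id ℝ ℝ).smulRight u) := rfl
  rw [iteratedDeriv_eq_iteratedFDeriv, hcomp,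
    ContinuousLinearMap.iteratedFDeriv_comp_right (f := fun z => f (x + z)) _
      (hf.comp (contDiff_const.add contDiff_id)) _ hk]
  simp [iteratedFDeriv_comp_add_left]

theorem abs_sub_secondOrderTaylor_le {h : ℝ → ℝ} {M : ℝ} (hh : ContDiff ℝ 3 h)
    (hM : ∀ t, |iteratedDeriv 3 h t| ≤ M) (x : ℝ) :
    |h x - (h 0 + deriv h 0 * x + iteratedDeriv 2 h 0 / 2 * x ^ 2)| ≤ M / 6 * |x| ^ 3 := by
  rcases eq_or_ne x 0 with rfl | hx
  · simp
  obtain ⟨ξ, -, hξ⟩ := taylor_mean_remainder_lagrange_iteratedDeriv hx.symm hh.contDiffOn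
  have hu : UniqueDiffOn ℝ (Set.uIcc 0 x) := uniqueDiffOn_uIcc hx.symm
  have hder : ∀ k ≤ 2, iteratedDerivWithin k h (Set.uIcc 0 x) 0 = iteratedDeriv k h 0 :=
    fun k hk => iteratedDerivWithin_eq_iteratedDeriv hu
      (hh.contDiffAt.of_le (by exact_mod_cast hk.trans (by norm_num))) Set.left_mem_uIcc
  simp only [taylor_within_apply, Finset.sum_range_succ, Finset.sum_range_zero,
    hder 0 (by norm_num), hder 1 (by norm_num), hder 2 (by norm_num), iteratedDeriv_zero,
    iteratedDeriv_one] at hξ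
  have hrem : h x - (h 0 + deriv h 0 * x + iteratedDeriv 2 h 0 / 2 * x ^ 2) =
      iteratedDeriv 3 h ξ * x ^ 3 / 6 := by
    norm_num [Nat.factorial] at hξ
    linear_combination hξ
  rw [hrem, abs_div, abs_mul, abs_pow, abs_of_pos (by norm_num : (0:ℝ) < 6)]
  linarith [mul_le_mul_of_nonneg_right (hM ξ) (by positivity : 0 ≤ |x| ^ 3)]

theorem abs_sub_sub_two_mul_deriv_le {h : ℝ → ℝ} {M : ℝ} (hh : ContDiff ℝ 3 h)
    (hM : ∀ t, |iteratedDeriv 3 h t| ≤ M) (x : ℝ) :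
    |h x - h (-x) - 2 * deriv h 0 * x| ≤ M / 3 * |x| ^ 3 := by
  have hpos := abs_sub_secondOrderTaylor_le hh hM x
  have hneg := abs_sub_secondOrderTaylor_le hh hM (-x)
  rw [abs_neg] at hneg
  calc |h x - h (-x) - 2 * deriv h 0 * x|
      = |(h x - (h 0 + deriv h 0 * x + iteratedDeriv 2 h 0 / 2 * x ^ 2))
          - (h (-x) - (h 0 + deriv h 0 * -x + iteratedDeriv 2 h 0 / 2 * (-x) ^ 2))| := by
        congr 1; ring
    _ ≤ M / 6 * |x| ^ 3 + M / 6 * |x| ^ 3 := (abs_sub _ _).trans (add_le_add hpos hneg)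
    _ = M / 3 * |x| ^ 3 := by ring

theorem abs_sub_sub_two_mul_fderiv_le {E : Type*} [NormedAddCommGroup E] [NormedSpace ℝ E]
    {f : E → ℝ} {B : ℝ} (hf : ContDiff ℝ 3 f) (hB : ∀ y, ‖iteratedFDeriv ℝ 3 f y‖ ≤ B) (x u : E) :
    |f (x + u) - f (x - u) - 2 * fderiv ℝ f x u| ≤ B / 3 * ‖u‖ ^ 3 := by
  have hline : ContDiff ℝ 3 (fun s : ℝ => f (x + s • u)) := by fun_prop
  have hthird : ∀ t, |iteratedDeriv 3 (fun s : ℝ => f (x + s • u)) t| ≤ B * ‖u‖ ^ 3 := by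
    intro t
    rw [iteratedDeriv_comp_add_smul hf le_rfl, ← Real.norm_eq_abs]
    refine ((iteratedFDeriv ℝ 3 f _).le_opNorm _).trans ?_
    simp only [Finset.prod_const, Finset.card_univ, Fintype.card_fin]
    gcongr
    exact hB _
  have hderiv : deriv (fun s : ℝ => f (x + s • u)) 0 = fderiv ℝ f x u := by
    rw [← iteratedDeriv_one, iteratedDeriv_comp_add_smul hf (by norm_num),
      iteratedFDeriv_one_apply]
    simp
  simpa [hderiv, ← sub_eq_add_neg, div_mul_eq_mul_div] using
    abs_sub_sub_two_mul_deriv_le hline hthird 1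

theorem abs_centralDifference_div_sub_fderiv_mul_le {E : Type*} [NormedAddCommGroup E]
    [NormedSpace ℝ E] {f : E → ℝ} {B r δ a : ℝ} (hf : ContDiff ℝ 3 f)
    (hB : ∀ y, ‖iteratedFDeriv ℝ 3 f y‖ ≤ B) (θ s : E) (hδ : 0 < δ) (hs : ‖s‖ ≤ r)
    (ha : a = 1 ∨ a = -1) :
    |(f (θ + δ • s) - f (θ - δ • s)) / (2 * δ * a) - fderiv ℝ f θ s * a| ≤
      B * r ^ 3 / 6 * δ ^ 2 := by
  have hB0 : 0 ≤ B := (norm_nonneg _).trans (hB θ)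
  have hnorm : ‖δ • s‖ ≤ δ * r := by
    rw [norm_smul, Real.norm_of_nonneg hδ.le]
    gcongr
  have hsplit : (f (θ + δ • s) - f (θ - δ • s)) / (2 * δ * a) - fderiv ℝ f θ s * a =
      (f (θ + δ • s) - f (θ - δ • s) - 2 * fderiv ℝ f θ (δ • s)) / (2 * δ) * a := by
    rw [map_smul, smul_eq_mul]
    rcases ha with rfl | rfl
    · field_simp
    · field_simp
      ring
  have ha1 : |a| = 1 := by rcases ha with rfl | rfl <;> norm_num
  rw [hsplit, abs_mul, ha1, mul_one, abs_div, abs_of_pos (by positivity : 0 < 2 * δ),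
    div_le_iff₀ (by positivity)]
  calc _ ≤ B / 3 * ‖δ • s‖ ^ 3 := abs_sub_sub_two_mul_fderiv_le hf hB θ (δ • s)
    _ ≤ B / 3 * (δ * r) ^ 3 := by gcongr
    _ = B * r ^ 3 / 6 * δ ^ 2 * (2 * δ) := by ring

def IsRademacher {Ω : Type*} [MeasurableSpace Ω] (X : Ω → ℝ) (μ : Measure Ω) : Prop :=
  μ {ω | X ω = 1} = 1 / 2 ∧ μ {ω | X ω = -1} = 1 / 2

namespace IsRademacher

variable {Ω : Type*} [MeasurableSpace Ω] {μ : Measure Ω} [IsProbabilityMeasure μ] {X : Ω → ℝ}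

theorem ae_eq_one_or_neg_one (hX : Measurable X) (h : IsRademacher X μ) :
    ∀ᵐ ω ∂μ, X ω = 1 ∨ X ω = -1 := by
  have hone : MeasurableSet {ω | X ω = 1} := hX (measurableSet_singleton 1)
  have hneg : MeasurableSet {ω | X ω = -1} := hX (measurableSet_singleton (-1))
  have hdisj : Disjoint {ω | X ω = 1} {ω | X ω = -1} :=
    Set.disjoint_left.2 fun ω (h1 : X ω = 1) (h2 : X ω = -1) => by norm_num [h1] at h2
  change ∀ᵐ ω ∂μ, ω ∈ {ω | X ω = 1} ∪ {ω | X ω = -1}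
  rw [ae_mem_iff_measure_eq (hone.union hneg).nullMeasurableSet, measure_union hdisj hneg, h.1,
    h.2, measure_univ, ENNReal.add_halves]

theorem ae_abs_le_one (hX : Measurable X) (h : IsRademacher X μ) : ∀ᵐ ω ∂μ, ‖X ω‖ ≤ 1 := by
  filter_upwards [h.ae_eq_one_or_neg_one hX] with ω hω
  rcases hω with hω | hω <;> simp [hω]

theorem integrable (hX : Measurable X) (h : IsRademacher X μ) : Integrable X μ :=
  .of_bound hX.aestronglyMeasurable 1 (h.ae_abs_le_one hX)

theorem integral_eq_zero (hX : Measurable X) (h : IsRademacher X μ) : ∫ ω, X ω ∂μ = 0 := by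
  have hone : MeasurableSet {ω | X ω = 1} := hX (measurableSet_singleton 1)
  have hX_eq : X =ᵐ[μ] fun ω => 2 * {ω | X ω = 1}.indicator 1 ω - 1 := by
    filter_upwards [h.ae_eq_one_or_neg_one hX] with ω hω
    rcases hω with hω | hω <;> norm_num [Set.indicator, hω]
  rw [integral_congr_ae hX_eq, integral_sub ((integrable_const _).indicator hone |>.const_mul 2)
    (integrable_const 1), integral_const_mul, integral_indicator_one hone, measureReal_def, h.1]
  norm_num

theorem integral_mul_self (hX : Measurable X) (h : IsRademacher X μ) :
    ∫ ω, X ω * X ω ∂μ = 1 := by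
  have hsq : (fun ω => X ω * X ω) =ᵐ[μ] fun _ => 1 := by
    filter_upwards [h.ae_eq_one_or_neg_one hX] with ω hω
    rcases hω with hω | hω <;> norm_num [hω]
  simp [integral_congr_ae hsq]

end IsRademacher

section
variable {Ω ι : Type*} [MeasurableSpace Ω] {μ : Measure Ω} [IsProbabilityMeasure μ]
  {Y : ι → Ω → ℝ}

theorem integral_mul_eq_ite_of_isRademacher [DecidableEq ι] (hind : iIndepFun Y μ)
    (hm : ∀ p, Measurable (Y p)) (hY : ∀ p, IsRademacher (Y p) μ) (p q : ι) :
    ∫ ω, Y p ω * Y q ω ∂μ = if p = q then 1 else 0 := by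
  split_ifs with hpq
  · subst hpq
    exact (hY p).integral_mul_self (hm p)
  · rw [(hind.indepFun hpq).integral_fun_mul_eq_mul_integral (hm p).aestronglyMeasurable
      (hm q).aestronglyMeasurable, (hY p).integral_eq_zero (hm p), zero_mul]

theorem integrable_mul_of_isRademacher (hm : ∀ p, Measurable (Y p))
    (hY : ∀ p, IsRademacher (Y p) μ) (p q : ι) : Integrable (fun ω => Y p ω * Y q ω) μ :=
  ((hY q).integrable (hm q)).bdd_mul (hm p).aestronglyMeasurable ((hY p).ae_abs_le_one (hm p))

theorem apply_add_mul_eq_sum {d : ℕ} (L : (Fin d → ℝ) →ₗ[ℝ] ℝ) (a b : Fin d → ℝ) (c : ℝ) :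
    L (fun j => a j + b j) * c = ∑ j, L (Pi.single j 1) * (a j * c + b j * c) := by
  conv_lhs => rw [pi_eq_sum_univ' fun j => a j + b j]
  simp only [map_sum, map_smul, smul_eq_mul, Finset.sum_mul]
  exact Finset.sum_congr rfl fun j _ => by ring

variable {d : ℕ} {Y : Fin d ⊕ Fin d → Ω → ℝ}

theorem integrable_apply_add_mul (hm : ∀ p, Measurable (Y p)) (hY : ∀ p, IsRademacher (Y p) μ)
    (L : (Fin d → ℝ) →ₗ[ℝ] ℝ) (i : Fin d) :
    Integrable (fun ω => L (fun j => Y (.inl j) ω + Y (.inr j) ω) * Y (.inl i) ω) μ := by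
  have hint := integrable_mul_of_isRademacher hm hY
  simp_rw [apply_add_mul_eq_sum L]
  exact integrable_finsetSum _ fun j _ => ((hint _ _).add (hint _ _)).const_mul _

theorem integral_apply_add_mul_eq (hind : iIndepFun Y μ) (hm : ∀ p, Measurable (Y p))
    (hY : ∀ p, IsRademacher (Y p) μ) (L : (Fin d → ℝ) →ₗ[ℝ] ℝ) (i : Fin d) :
    ∫ ω, L (fun j => Y (.inl j) ω + Y (.inr j) ω) * Y (.inl i) ω ∂μ = L (Pi.single i 1) := by
  have hint := integrable_mul_of_isRademacher hm hY
  simp_rw [apply_add_mul_eq_sum L]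
  rw [integral_finsetSum]
  · simp_rw [integral_const_mul, integral_add (hint _ _) (hint _ _),
      integral_mul_eq_ite_of_isRademacher hind hm hY]
    simp
  · exact fun j _ => ((hint _ _).add (hint _ _)).const_mul _

end

theorem abs_integral_sub_integral_le_of_ae_abs_sub_le {Ω : Type*} [MeasurableSpace Ω]
    {μ : Measure Ω} [IsProbabilityMeasure μ] {F G : Ω → ℝ} {K : ℝ} (hF : AEStronglyMeasurable F μ)
    (hG : Integrable G μ) (h : ∀ᵐ ω ∂μ, |F ω - G ω| ≤ K) :
    |∫ ω, F ω ∂μ - ∫ ω, G ω ∂μ| ≤ K := by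
  have hFG : Integrable (F - G) μ := .of_bound (hF.sub hG.aestronglyMeasurable) K h
  rw [← integral_sub (by simpa using hFG.add hG) hG]
  simpa using norm_integral_le_of_norm_le_const (μ := μ) (f := F - G) (by simpa using h)

theorem spsa_newton_gradient_estimate_bias_general (d : ℕ) (B : ℝ) :
    ∃ C : ℝ, ∀ (Ω : Type) (_ : MeasurableSpace Ω) (μ : Measure Ω),
      IsProbabilityMeasure μ →
      ∀ f : (Fin d → ℝ) → ℝ, ContDiff ℝ 3 f →
      (∀ θ : Fin d → ℝ, ‖iteratedFDeriv ℝ 3 f θ‖ ≤ B) →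
      ∀ Δ Δ' : Ω → Fin d → ℝ,
      (∀ i, Measurable fun ω => Δ ω i) → (∀ i, Measurable fun ω => Δ' ω i) →
      -- all 2d coordinates of (Δ, Δ') are mutually independent
      ProbabilityTheory.iIndepFun
        (Sum.elim (fun i ω => Δ ω i) (fun i ω => Δ' ω i)) μ →
      -- each coordinate is Rademacher
      (∀ i, μ {ω | Δ ω i = 1} = 1 / 2 ∧ μ {ω | Δ ω i = -1} = 1 / 2) →
      (∀ i, μ {ω | Δ' ω i = 1} = 1 / 2 ∧ μ {ω | Δ' ω i = -1} = 1 / 2) →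
      ∀ (θ : Fin d → ℝ) (δ : ℝ), 0 < δ → ∀ i : Fin d,
        |(∫ ω, (f (θ + δ • (Δ ω + Δ' ω)) - f (θ - δ • (Δ ω + Δ' ω)))
              / (2 * δ * Δ ω i) ∂μ)
            - fderiv ℝ f θ (Pi.single i 1)|
          ≤ C * δ ^ 2 := by
  refine ⟨B * 2 ^ 3 / 6, fun Ω _ μ _ f hf hB Δ Δ' hΔm hΔ'm hind hΔ hΔ' θ δ hδ i => ?_⟩
  set Y := Sum.elim (fun i ω => Δ ω i) (fun i ω => Δ' ω i)
  have hYm : ∀ p, Measurable (Y p) := Sum.rec hΔm hΔ'm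
  have hY : ∀ p, IsRademacher (Y p) μ := Sum.rec hΔ hΔ'
  have hsign : ∀ᵐ ω ∂μ, ∀ p, Y p ω = 1 ∨ Y p ω = -1 :=
    ae_all_iff.2 fun p => (hY p).ae_eq_one_or_neg_one (hYm p)
  have hmean : ∫ ω, fderiv ℝ f θ (Δ ω + Δ' ω) * Δ ω i ∂μ = fderiv ℝ f θ (Pi.single i 1) :=
    integral_apply_add_mul_eq hind hYm hY (fderiv ℝ f θ).toLinearMap i
  rw [← hmean]
  refine abs_integral_sub_integral_le_of_ae_abs_sub_le ?_
    (integrable_apply_add_mul hYm hY (fderiv ℝ f θ).toLinearMap i) ?_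
  · have hfm := hf.continuous.measurable
    exact Measurable.aestronglyMeasurable (by fun_prop)
  · filter_upwards [hsign] with ω hω
    refine abs_centralDifference_div_sub_fderiv_mul_le hf hB θ _ hδ
      ((pi_norm_le_iff_of_nonneg zero_le_two).2 fun j => ?_) (hω (.inl i))
    rcases hω (.inl j) with h | h <;> rcases hω (.inr j) with h' | h' <;>
      simp only [Y, Sum.elim_inl, Sum.elim_inr] at h h' <;> norm_num [h, h']

/-- for a `C³` function `f : ℝ^d → ℝ` with third derivatives bounded
by `B`, the Newton-SPSA finite-difference gradient estimator using two independent
Rademacher perturbation vectors `Δ, Δ̂` (all `2d` coordinates mutually independent)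
has bias at most `C δ²` in each coordinate, where `C` depends only on `d` and `B`. -/
theorem spsa_newton_gradient_estimate_bias (d : ℕ) (B : ℝ) (hB : 0 ≤ B) :
    ∃ C : ℝ, ∀ (Ω : Type) (_ : MeasurableSpace Ω) (μ : Measure Ω),
      IsProbabilityMeasure μ →
      ∀ f : (Fin d → ℝ) → ℝ, ContDiff ℝ 3 f →
      (∀ θ : Fin d → ℝ, ‖iteratedFDeriv ℝ 3 f θ‖ ≤ B) →
      ∀ Δ Δ' : Ω → Fin d → ℝ,
      (∀ i, Measurable fun ω => Δ ω i) → (∀ i, Measurable fun ω => Δ' ω i) →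
      -- all 2d coordinates of (Δ, Δ') are mutually independent
      ProbabilityTheory.iIndepFun
        (Sum.elim (fun i ω => Δ ω i) (fun i ω => Δ' ω i)) μ →
      -- each coordinate is Rademacher
      (∀ i, μ {ω | Δ ω i = 1} = 1 / 2 ∧ μ {ω | Δ ω i = -1} = 1 / 2) →
      (∀ i, μ {ω | Δ' ω i = 1} = 1 / 2 ∧ μ {ω | Δ' ω i = -1} = 1 / 2) →
      ∀ (θ : Fin d → ℝ) (δ : ℝ), 0 < δ → ∀ i : Fin d,
        |(∫ ω, (f (θ + δ • (Δ ω + Δ' ω)) - f (θ - δ • (Δ ω + Δ' ω)))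
              / (2 * δ * Δ ω i) ∂μ)
            - fderiv ℝ f θ (Pi.single i 1)|
          ≤ C * δ ^ 2 :=
  spsa_newton_gradient_estimate_bias_general d B
end

section
/- Let Y be a random variable taking values in [0, M], let Y₁, …, Yₙ be i.i.d. copies of Y with empirical distribution function F̂ₙ(t) = (1/n) Σ_{i=1}^n 1{Yᵢ ≤ t}, and let w : [0,1] → [0,1] be Hölder continuous of order α ∈ (0,1] with constant H. Then for every ε > 0, P( | ∫₀^∞ w(P(Y > t)) dt − ∫₀^∞ w(1 − F̂ₙ(t)) dt | > ε ) ≤ 2 exp( −2n (ε/(HM))^{2/α} ), where the probabilities and integrals are over t ∈ [0, M] (both integrands vanish for t > M). -/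
open MeasureTheory

/-- The empirical distribution function of the points `y 0, …, y (n-1)`:
`F̂ₙ(t) = (1/n) Σ_{i=1}^n 1{yᵢ ≤ t}`. -/
noncomputable def empiricalCDF (n : ℕ) (y : Fin n → ℝ) (t : ℝ) : ℝ :=
  ((Finset.univ.filter fun i => y i ≤ t).card : ℝ) / n

/-!
Hölder continuity of `w` and Jensen's inequality for the concave map `x ↦ x ^ α` bound the
difference of the two integrals by `H M (⨍ |F̂ₙ - F|) ^ α`, the average being over `(0, M]`; so the
event forces `⨍ |F̂ₙ - F| ≥ δ := (ε / (H M)) ^ (1 / α)`. The tail of this average is controlled by a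
Chernoff bound rather than by the DKW inequality itself: Jensen's inequality for `exp` and Fubini
reduce its moment generating function to that of `|F̂ₙ(t) - F(t)|` at a fixed `t`, an average of
`n` independent centred indicators, which Hoeffding's lemma makes sub-Gaussian with variance proxy
`1 / (4 n)`. The choice `s = 4 n δ` then gives `2 exp (-2 n δ²)`.
-/

open Real ProbabilityTheory Set

lemma empiricalCDF_eq_sum_indicator (n : ℕ) (y : Fin n → ℝ) (t : ℝ) :
    empiricalCDF n y t = (∑ i, (Iic t).indicator 1 (y i)) / n := by
  simp only [empiricalCDF, Finset.card_filter, Nat.cast_sum, Nat.cast_ite, Nat.cast_one,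
    Nat.cast_zero, indicator_apply, mem_Iic, Pi.one_apply]

lemma empiricalCDF_mem_Icc (n : ℕ) (y : Fin n → ℝ) (t : ℝ) :
    empiricalCDF n y t ∈ Icc (0 : ℝ) 1 := by
  refine ⟨by unfold empiricalCDF; positivity, div_le_one_of_le₀ ?_ n.cast_nonneg⟩
  exact_mod_cast (Finset.card_filter_le _ _).trans_eq (Finset.card_fin n)

lemma measurable_empiricalCDF_uncurry {Ω : Type*} [MeasurableSpace Ω] {n : ℕ}
    {Ys : Fin n → Ω → ℝ} (hYs : ∀ i, Measurable (Ys i)) :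
    Measurable fun p : Ω × ℝ => empiricalCDF n (fun i => Ys i p.1) p.2 := by
  simp only [empiricalCDF_eq_sum_indicator, indicator_apply, mem_Iic, Pi.one_apply]
  refine Measurable.div_const (Finset.measurable_sum _ fun i _ => ?_) _
  exact Measurable.ite (measurableSet_le ((hYs i).comp measurable_fst) measurable_snd)
    measurable_const measurable_const

lemma monotone_empiricalCDF (n : ℕ) (y : Fin n → ℝ) : Monotone (empiricalCDF n y) :=
  fun _ _ hst => div_le_div_of_nonneg_right (by
    exact_mod_cast Finset.card_le_card
      (Finset.monotone_filter_right _ fun i _ (hi : y i ≤ _) => hi.trans hst)) n.cast_nonneg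

lemma monotone_measureReal_le {Ω : Type*} [MeasurableSpace Ω] (μ : Measure Ω)
    [IsFiniteMeasure μ] (Y : Ω → ℝ) : Monotone fun t => μ.real {ω | Y ω ≤ t} :=
  fun _ _ hst => measureReal_mono fun _ hω => le_trans hω hst

namespace ProbabilityTheory.HasSubgaussianMGF

variable {Ω : Type*} [MeasurableSpace Ω] {μ : Measure Ω} {X : Ω → ℝ} {c : NNReal}

lemma mgf_abs_le (h : HasSubgaussianMGF X c μ) (t : ℝ) :
    mgf (fun ω => |X ω|) μ t ≤ 2 * exp (c * t ^ 2 / 2) := by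
  have hexp_le (ω : Ω) : exp (t * |X ω|) ≤ exp (t * X ω) + exp (-t * X ω) := by
    rcases abs_choice (X ω) with h | h <;> rw [h]
    · linarith [exp_pos (-t * X ω)]
    · rw [mul_neg, ← neg_mul]; linarith [exp_pos (t * X ω)]
  calc mgf (fun ω => |X ω|) μ t ≤ ∫ ω, (exp (t * X ω) + exp (-t * X ω)) ∂μ :=
        integral_mono_of_nonneg (ae_of_all _ fun ω => (exp_pos _).le)
          ((h.integrable_exp_mul t).add (h.integrable_exp_mul (-t))) (ae_of_all _ hexp_le)
    _ = mgf X μ t + mgf X μ (-t) :=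
        integral_add (h.integrable_exp_mul t) (h.integrable_exp_mul (-t))
    _ ≤ exp (c * t ^ 2 / 2) + exp (c * (-t) ^ 2 / 2) :=
        add_le_add (h.mgf_le t) (h.mgf_le (-t))
    _ = 2 * exp (c * t ^ 2 / 2) := by rw [neg_sq]; ring

end ProbabilityTheory.HasSubgaussianMGF

section Averaging

variable {Ω T : Type*} [MeasurableSpace Ω] [MeasurableSpace T] (μ : Measure Ω)
  [IsFiniteMeasure μ] (ρ : Measure T) [IsProbabilityMeasure ρ] {G : Ω → T → ℝ} {a b : ℝ}

lemma mgf_integral_le_integral_mgf (hG : Measurable (Function.uncurry G))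
    (hGab : ∀ ω t, G ω t ∈ Icc a b) (s : ℝ) :
    mgf (fun ω => ∫ t, G ω t ∂ρ) μ s ≤ ∫ t, mgf (fun ω => G ω t) μ s ∂ρ := by
  have hexp_int : Integrable (Function.uncurry fun ω t => exp (s * G ω t)) (μ.prod ρ) :=
    integrable_exp_mul_of_mem_Icc hG.aemeasurable (ae_of_all _ fun p => hGab p.1 p.2)
  have hjensen (ω : Ω) : exp (s * ∫ t, G ω t ∂ρ) ≤ ∫ t, exp (s * G ω t) ∂ρ := by
    have hGω : AEMeasurable (G ω) ρ := (hG.comp measurable_prodMk_left).aemeasurable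
    rw [← integral_const_mul]
    exact convexOn_exp.map_integral_le continuous_exp.continuousOn isClosed_univ
      (ae_of_all _ fun _ => mem_univ _)
      ((Integrable.of_mem_Icc a b hGω (ae_of_all _ (hGab ω))).const_mul s)
      (integrable_exp_mul_of_mem_Icc hGω (ae_of_all _ (hGab ω)))
  calc mgf (fun ω => ∫ t, G ω t ∂ρ) μ s ≤ ∫ ω, ∫ t, exp (s * G ω t) ∂ρ ∂μ :=
        integral_mono_of_nonneg (ae_of_all _ fun _ => (exp_pos _).le)
          hexp_int.integral_prod_left (ae_of_all _ hjensen)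
    _ = ∫ t, mgf (fun ω => G ω t) μ s ∂ρ := integral_integral_swap hexp_int

lemma measureReal_le_integral_le_of_mgf_le (hG : Measurable (Function.uncurry G))
    (hGab : ∀ ω t, G ω t ∈ Icc a b) {s B : ℝ} (hs : 0 ≤ s)
    (hB : ∀ t, mgf (fun ω => G ω t) μ s ≤ B) (ε : ℝ) :
    μ.real {ω | ε ≤ ∫ t, G ω t ∂ρ} ≤ exp (-s * ε) * B := by
  have hGint (ω : Ω) : ∫ t, G ω t ∂ρ ∈ Icc a b :=
    (convex_Icc a b).integral_mem isClosed_Icc (ae_of_all _ (hGab ω))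
      (Integrable.of_mem_Icc a b (hG.comp measurable_prodMk_left).aemeasurable
        (ae_of_all _ (hGab ω)))
  have hint : Integrable (fun ω => exp (s * ∫ t, G ω t ∂ρ)) μ :=
    integrable_exp_mul_of_mem_Icc
      hG.stronglyMeasurable.integral_prod_right'.measurable.aemeasurable (ae_of_all _ hGint)
  calc μ.real {ω | ε ≤ ∫ t, G ω t ∂ρ} ≤ exp (-s * ε) * mgf (fun ω => ∫ t, G ω t ∂ρ) μ s :=
        measure_ge_le_exp_mul_mgf ε hs hint
    _ ≤ exp (-s * ε) * ∫ t, mgf (fun ω => G ω t) μ s ∂ρ := by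
        gcongr
        exact mgf_integral_le_integral_mgf μ ρ hG hGab s
    _ ≤ exp (-s * ε) * B := by
        gcongr
        exact (integral_mono_of_nonneg (ae_of_all _ fun _ => mgf_nonneg) (integrable_const B)
          (ae_of_all _ hB)).trans_eq (by simp)

end Averaging

section EmpiricalCDF

variable {Ω : Type*} [MeasurableSpace Ω] (μ : Measure Ω) [IsProbabilityMeasure μ] {n : ℕ}
  {Ys : Fin n → Ω → ℝ} {Y : Ω → ℝ}

lemma hasSubgaussianMGF_empiricalCDF_sub (hn : 0 < n) (hYs : ∀ i, Measurable (Ys i))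
    (hindep : iIndepFun Ys μ) (hident : ∀ i, IdentDistrib (Ys i) Y μ μ) (t : ℝ) :
    HasSubgaussianMGF (fun ω => empiricalCDF n (fun i => Ys i ω) t - μ.real {ω | Y ω ≤ t})
      (4 * n)⁻¹ μ := by
  set p := μ.real {ω | Y ω ≤ t}
  have hφ : Measurable ((Iic t).indicator (1 : ℝ → ℝ)) :=
    measurable_one.indicator measurableSet_Iic
  have hmean (i : Fin n) : μ[fun ω => (Iic t).indicator 1 (Ys i ω)] = p := by
    change ∫ ω, (Ys i ⁻¹' Iic t).indicator 1 ω ∂μ = p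
    rw [integral_indicator_one ((hYs i) measurableSet_Iic), measureReal_def,
      (hident i).measure_mem_eq measurableSet_Iic]
    rfl
  have hsubG (i : Fin n) :
      HasSubgaussianMGF (fun ω => (Iic t).indicator 1 (Ys i ω) - p)
        ((‖(1 : ℝ) - 0‖₊ / 2) ^ 2) μ := by
    rw [← hmean i]
    exact hasSubgaussianMGF_of_mem_Icc (hφ.comp (hYs i)).aemeasurable
      (ae_of_all _ fun ω => ⟨indicator_nonneg (fun _ _ => zero_le_one) _,
        indicator_le_self' (fun _ _ => zero_le_one) _⟩)
  have hsum := (HasSubgaussianMGF.sum_of_iIndepFun (s := Finset.univ)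
    (hindep.comp _ fun _ => hφ.sub_const p) fun i _ => hsubG i).const_mul (n : ℝ)⁻¹
  have hn' : (n : ℝ) ≠ 0 := by positivity
  convert hsum.congr (ae_of_all _ fun ω => ?_) using 1
  · -- `const_mul` writes its parameter as an anonymous `{r // 0 ≤ r}`, opaque to `NNReal` lemmas
    ext
    change ((4 * (n : NNReal))⁻¹ : ℝ)
      = (n : ℝ)⁻¹ ^ 2 * ((∑ _i : Fin n, (‖(1 : ℝ) - 0‖₊ / 2) ^ 2 : NNReal) : ℝ)
    simp only [sub_zero, nnnorm_one, Finset.sum_const, Finset.card_univ, Fintype.card_fin,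
      nsmul_eq_mul, NNReal.coe_mul, NNReal.coe_pow, NNReal.coe_div,
      NNReal.coe_natCast, NNReal.coe_ofNat, NNReal.coe_one]
    field_simp
    ring
  · simp only [empiricalCDF_eq_sum_indicator, Function.comp_apply, Finset.sum_sub_distrib,
      Finset.sum_const, Finset.card_univ, Fintype.card_fin, nsmul_eq_mul]
    field_simp

lemma mgf_abs_empiricalCDF_sub_le (hn : 0 < n) (hYs : ∀ i, Measurable (Ys i))
    (hindep : iIndepFun Ys μ) (hident : ∀ i, IdentDistrib (Ys i) Y μ μ) (t s : ℝ) :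
    mgf (fun ω => |empiricalCDF n (fun i => Ys i ω) t - μ.real {ω | Y ω ≤ t}|) μ s
      ≤ 2 * exp (s ^ 2 / (8 * n)) := by
  refine ((hasSubgaussianMGF_empiricalCDF_sub μ hn hYs hindep hident t).mgf_abs_le s).trans_eq
    ?_
  push_cast
  ring_nf

theorem measureReal_le_integral_abs_empiricalCDF_sub_le (hn : 0 < n)
    (hYs : ∀ i, Measurable (Ys i)) (hindep : iIndepFun Ys μ)
    (hident : ∀ i, IdentDistrib (Ys i) Y μ μ) (ρ : Measure ℝ) [IsProbabilityMeasure ρ]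
    {δ : ℝ} (hδ : 0 ≤ δ) :
    μ.real {ω | δ ≤ ∫ t, |empiricalCDF n (fun i => Ys i ω) t - μ.real {ω | Y ω ≤ t}| ∂ρ}
      ≤ 2 * exp (-2 * n * δ ^ 2) := by
  have hG : Measurable (Function.uncurry fun ω t =>
      |empiricalCDF n (fun i => Ys i ω) t - μ.real {ω | Y ω ≤ t}|) :=
    ((measurable_empiricalCDF_uncurry hYs).sub
      ((monotone_measureReal_le μ Y).measurable.comp measurable_snd)).abs
  have hG01 (ω : Ω) (t : ℝ) :
      |empiricalCDF n (fun i => Ys i ω) t - μ.real {ω | Y ω ≤ t}| ∈ Icc (0 : ℝ) 1 :=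
    ⟨abs_nonneg _, abs_sub_le_of_nonneg_of_le (empiricalCDF_mem_Icc _ _ _).1
      (empiricalCDF_mem_Icc _ _ _).2 measureReal_nonneg measureReal_le_one⟩
  -- `s = 4 n δ` minimises the Chernoff exponent `-s δ + s² / (8 n)`
  calc _ ≤ exp (-(4 * n * δ) * δ) * (2 * exp ((4 * n * δ) ^ 2 / (8 * n))) :=
        measureReal_le_integral_le_of_mgf_le μ ρ hG hG01 (by positivity)
          (fun t => mgf_abs_empiricalCDF_sub_le μ hn hYs hindep hident t _) δ
    _ = 2 * exp (-2 * n * δ ^ 2) := by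
        rw [mul_left_comm, ← exp_add]
        congr 2
        field_simp
        ring

end EmpiricalCDF

lemma continuousOn_of_dist_le_mul_rpow {X Y : Type*} [PseudoMetricSpace X] [PseudoMetricSpace Y]
    {f : X → Y} {s : Set X} {H β : ℝ} (hβ : 0 < β)
    (hf : ∀ x ∈ s, ∀ y ∈ s, dist (f x) (f y) ≤ H * dist x y ^ β) : ContinuousOn f s := by
  intro x hx
  rw [ContinuousWithinAt, tendsto_iff_dist_tendsto_zero]
  have hlim : Filter.Tendsto (fun y => H * dist y x ^ β) (nhdsWithin x s) (nhds 0) := by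
    have := (((continuous_id.dist (continuous_const (y := x))).rpow_const
      fun _ => Or.inr hβ.le).const_mul H).tendsto x
    simpa [Real.zero_rpow hβ.ne'] using this.mono_left nhdsWithin_le_nhds
  exact squeeze_zero' (Filter.Eventually.of_forall fun _ => dist_nonneg)
    (eventually_nhdsWithin_of_forall fun y hy => hf y hy x hx) hlim

lemma abs_integral_comp_sub_integral_comp_le {α : Type*} [MeasurableSpace α] (ν : Measure α)
    [IsFiniteMeasure ν] [NeZero ν] {w : ℝ → ℝ} {H β : ℝ} (hH : 0 ≤ H) (hβ0 : 0 < β) (hβ1 : β ≤ 1)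
    (hw : ∀ x ∈ Icc (0 : ℝ) 1, ∀ y ∈ Icc (0 : ℝ) 1, |w x - w y| ≤ H * |x - y| ^ β)
    {f g : α → ℝ} (hf : Measurable f) (hg : Measurable g) (hf01 : ∀ a, f a ∈ Icc (0 : ℝ) 1)
    (hg01 : ∀ a, g a ∈ Icc (0 : ℝ) 1) :
    |∫ a, w (f a) ∂ν - ∫ a, w (g a) ∂ν| ≤ H * ν.real univ * (⨍ a, |f a - g a| ∂ν) ^ β := by
  have hwc : ContinuousOn w (Icc 0 1) :=
    continuousOn_of_dist_le_mul_rpow hβ0 (by simpa only [Real.dist_eq] using hw)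
  obtain ⟨C, hC⟩ := isCompact_Icc.exists_bound_of_continuousOn hwc
  have hint {h : α → ℝ} (hh : Measurable h) (hh01 : ∀ a, h a ∈ Icc (0 : ℝ) 1) :
      Integrable (fun a => w (h a)) ν :=
    .of_bound (hwc.domRestrict.measurable.comp (hh.subtype_mk (h := hh01))).aestronglyMeasurable
      C (ae_of_all _ fun a => hC _ (hh01 a))
  have hd : AEMeasurable (fun a => |f a - g a|) ν := (hf.sub hg).abs.aemeasurable
  have hd01 (a : α) : |f a - g a| ∈ Icc (0 : ℝ) 1 :=
    ⟨abs_nonneg _, abs_sub_le_of_nonneg_of_le (hf01 a).1 (hf01 a).2 (hg01 a).1 (hg01 a).2⟩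
  have hdβ : Integrable (fun a => |f a - g a| ^ β) ν :=
    .of_mem_Icc 0 1 (hd.pow_const β) (ae_of_all _ fun a =>
      ⟨rpow_nonneg (hd01 a).1 β, rpow_le_one (hd01 a).1 (hd01 a).2 hβ0.le⟩)
  have hjensen : ⨍ a, |f a - g a| ^ β ∂ν ≤ (⨍ a, |f a - g a| ∂ν) ^ β :=
    (concaveOn_rpow hβ0.le hβ1).le_map_average
      (fun x _ => (continuousAt_rpow_const x β (Or.inr hβ0.le)).continuousWithinAt) isClosed_Ici
      (ae_of_all _ fun a => (hd01 a).1) (.of_mem_Icc 0 1 hd (ae_of_all _ hd01)) hdβ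
  calc |∫ a, w (f a) ∂ν - ∫ a, w (g a) ∂ν| = |∫ a, (w (f a) - w (g a)) ∂ν| := by
        rw [integral_sub (hint hf hf01) (hint hg hg01)]
    _ ≤ ∫ a, |w (f a) - w (g a)| ∂ν := abs_integral_le_integral_abs
    _ ≤ ∫ a, H * |f a - g a| ^ β ∂ν :=
        integral_mono_of_nonneg (ae_of_all _ fun _ => abs_nonneg _) (hdβ.const_mul H)
          (ae_of_all _ fun a => hw _ (hf01 a) _ (hg01 a))
    _ = H * ν.real univ * ⨍ a, |f a - g a| ^ β ∂ν := by
        rw [integral_const_mul, average_eq, smul_eq_mul, mul_assoc,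
          mul_inv_cancel_left₀ measureReal_univ_pos.ne']
    _ ≤ H * ν.real univ * (⨍ a, |f a - g a| ∂ν) ^ β := by gcongr

theorem dkw_plugin_distorted_tail_integral_general
    {Ω : Type*} [MeasurableSpace Ω] (μ : Measure Ω) [IsProbabilityMeasure μ]
    (M : ℝ) (hM : 0 < M)
    (Y : Ω → ℝ) (hYmeas : Measurable Y)
    (n : ℕ) (hn : 0 < n)
    (Ys : Fin n → Ω → ℝ) (hYsmeas : ∀ i, Measurable (Ys i))
    (hindep : ProbabilityTheory.iIndepFun Ys μ)
    (hident : ∀ i, ProbabilityTheory.IdentDistrib (Ys i) Y μ μ)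
    (w : ℝ → ℝ) (α H : ℝ) (hα0 : 0 < α) (hα1 : α ≤ 1) (hH : 0 < H)
    (hw_holder : ∀ x ∈ Set.Icc (0:ℝ) 1, ∀ y ∈ Set.Icc (0:ℝ) 1,
      |w x - w y| ≤ H * |x - y| ^ α) :
    ∀ ε > (0:ℝ),
      (μ {ω | |(∫ t in Set.Ioc (0:ℝ) M, w ((μ {ω' | Y ω' > t}).toReal))
          - ∫ t in Set.Ioc (0:ℝ) M,
              w (1 - empiricalCDF n (fun i => Ys i ω) t)| > ε}).toReal
        ≤ 2 * Real.exp (-2 * n * (ε / (H * M)) ^ (2 / α)) := by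
  intro ε hε
  set ν := volume.restrict (Ioc (0 : ℝ) M)
  have : NeZero ν := ⟨by simp [ν, Measure.restrict_eq_zero, hM]⟩
  have hνuniv : ν.real univ = M := by simp [ν, hM.le]
  set F := fun t => μ.real {ω | Y ω ≤ t}
  have htail (t : ℝ) : (μ {ω | Y ω > t}).toReal = 1 - F t := by
    rw [← probReal_compl_eq_one_sub (measurableSet_le hYmeas measurable_const)]
    simp only [compl_ofPred, not_le, measureReal_def]
  set δ := (ε / (H * M)) ^ α⁻¹
  have hevent :
      {ω | |(∫ t, w (1 - F t) ∂ν) - ∫ t, w (1 - empiricalCDF n (fun i => Ys i ω) t) ∂ν| > ε}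
      ⊆ {ω | δ ≤ ∫ t, |empiricalCDF n (fun i => Ys i ω) t - F t| ∂((ν univ)⁻¹ • ν)} := by
    intro ω hω
    have hdet := abs_integral_comp_sub_integral_comp_le ν hH.le hα0 hα1 hw_holder
      (f := fun t => 1 - F t) (g := fun t => 1 - empiricalCDF n (fun i => Ys i ω) t)
      (measurable_const.sub (monotone_measureReal_le μ Y).measurable)
      (measurable_const.sub (monotone_empiricalCDF n _).measurable)
      (fun _ => Icc.mem_iff_one_sub_mem.1 ⟨measureReal_nonneg, measureReal_le_one⟩)
      (fun t => Icc.mem_iff_one_sub_mem.1 (empiricalCDF_mem_Icc n _ t))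
    simp only [sub_sub_sub_cancel_left, hνuniv, average_eq'] at hdet
    rw [mem_ofPred_eq, rpow_inv_le_iff_of_pos (by positivity)
      (integral_nonneg fun _ => abs_nonneg _) hα0, div_le_iff₀' (by positivity)]
    exact hω.le.trans hdet
  simp_rw [htail]
  calc _ ≤ _ := measureReal_mono hevent
    _ ≤ 2 * exp (-2 * n * δ ^ 2) :=
        measureReal_le_integral_abs_empiricalCDF_sub_le μ hn hYsmeas hindep hident _ (by positivity)
    _ = 2 * Real.exp (-2 * n * (ε / (H * M)) ^ (2 / α)) := by
        rw [← rpow_natCast, ← rpow_mul (by positivity)]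
        norm_num [div_eq_inv_mul]

/-- DKW-based concentration for the plug-in estimate of the
distorted tail integral: for `Y ∈ [0,M]`, i.i.d. samples `Y₁,…,Yₙ` with empirical
CDF `F̂ₙ`, and `w` Hölder of order `α` with constant `H`,
`P(|∫ w(P(Y>t)) dt - ∫ w(1-F̂ₙ(t)) dt| > ε) ≤ 2 exp(-2n(ε/(HM))^{2/α})`,
with both integrals taken over `t ∈ [0,M]`. -/
theorem dkw_plugin_distorted_tail_integral
    {Ω : Type*} [MeasurableSpace Ω] (μ : Measure Ω) [IsProbabilityMeasure μ]
    (M : ℝ) (hM : 0 < M)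
    (Y : Ω → ℝ) (hYmeas : Measurable Y) (hYrange : ∀ ω, Y ω ∈ Set.Icc (0:ℝ) M)
    (n : ℕ) (hn : 0 < n)
    (Ys : Fin n → Ω → ℝ) (hYsmeas : ∀ i, Measurable (Ys i))
    (hindep : ProbabilityTheory.iIndepFun Ys μ)
    (hident : ∀ i, ProbabilityTheory.IdentDistrib (Ys i) Y μ μ)
    (w : ℝ → ℝ) (α H : ℝ) (hα0 : 0 < α) (hα1 : α ≤ 1) (hH : 0 < H)
    (hw_range : ∀ x ∈ Set.Icc (0:ℝ) 1, w x ∈ Set.Icc (0:ℝ) 1)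
    (hw_holder : ∀ x ∈ Set.Icc (0:ℝ) 1, ∀ y ∈ Set.Icc (0:ℝ) 1,
      |w x - w y| ≤ H * |x - y| ^ α) :
    ∀ ε > (0:ℝ),
      (μ {ω | |(∫ t in Set.Ioc (0:ℝ) M, w ((μ {ω' | Y ω' > t}).toReal))
          - ∫ t in Set.Ioc (0:ℝ) M,
              w (1 - empiricalCDF n (fun i => Ys i ω) t)| > ε}).toReal
        ≤ 2 * Real.exp (-2 * n * (ε / (H * M)) ^ (2 / α)) :=
  dkw_plugin_distorted_tail_integral_general μ M hM Y hYmeas n hn Ys hYsmeas hindep hident w α H hα0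
    hα1 hH hw_holder
end
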